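/- arXiv:2604.16467 — 3 statements merged into one kernel-verified Lean document; each statement's English description precedes it below -/
import Mathlib

section
/- Let n ≥ 1, let f ∈ (0,1) be a lending fee, and let R ∈ ℝ^n be a reserve vector with R ≥ 0 componentwise and R ≠ 0. Then there exists no differentiable function F : ℝ^n → ℝ such that for every price vector p in the open positive orthant ℝ^n_{++}, (i) the gradient satisfies (∇F(p))_i ≥ 8 f R_i / (p · R) for every index i, and (ii) F(p) ≤ 1. That is, the conditions '∇_p F ≥ 8fR/(p·R) componentwise' and 'F ≤ 1' are self-contradictory. -/
/-!
Restricting `F` to the diagonal ray `t ↦ t • (1, …, 1)`, the gradient bound sums to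
`d/dt F(t • 1) ≥ 8f / t`, so `F(t • 1) - 8f log t` is nondecreasing and `F(t • 1) → ∞`,
contradicting `F ≤ 1`.
-/

open Real Set Filter

theorem add_mul_log_le_of_div_le_deriv {g g' : ℝ → ℝ} {c : ℝ}
    (hg : ∀ t ∈ Ioi (0 : ℝ), HasDerivAt g (g' t) t) (hg' : ∀ t ∈ Ioi (0 : ℝ), c / t ≤ g' t)
    {s t : ℝ} (hs : 0 < s) (hst : s ≤ t) : g s + c * (log t - log s) ≤ g t := by
  have hmono : MonotoneOn (fun x => g x - c * log x) (Ioi 0) := by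
    refine monotoneOn_of_hasDerivWithinAt_nonneg (convex_Ioi 0)
      (f' := fun x => g' x - c * x⁻¹) ?_ ?_ ?_
    · exact fun x hx => ((hg x hx).continuousAt.sub
        (continuousAt_const.mul (continuousAt_log (ne_of_gt hx)))).continuousWithinAt
    · rw [interior_Ioi]
      exact fun x hx =>
        ((hg x hx).sub ((hasDerivAt_log (ne_of_gt hx)).const_mul c)).hasDerivWithinAt
    · rw [interior_Ioi]
      exact fun x hx => sub_nonneg.2 (hg' x hx)
  have := hmono hs (hs.trans_le hst) hst
  simp only at this
  linarith

theorem tendsto_atTop_of_div_le_deriv {g g' : ℝ → ℝ} {c : ℝ} (hc : 0 < c)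
    (hg : ∀ t ∈ Ioi (0 : ℝ), HasDerivAt g (g' t) t) (hg' : ∀ t ∈ Ioi (0 : ℝ), c / t ≤ g' t) :
    Tendsto g atTop atTop := by
  have hlog : Tendsto (fun t => g 1 + c * (log t - log 1)) atTop atTop := by
    simpa only [log_one, sub_zero] using
      tendsto_atTop_add_const_left _ _ (tendsto_log_atTop.const_mul_atTop hc)
  refine tendsto_atTop_mono' _ ?_ hlog
  filter_upwards [eventually_ge_atTop 1] with t ht
  exact add_mul_log_le_of_div_le_deriv hg hg' one_pos ht

theorem hasDerivAt_comp_smul_const {E : Type*} [NormedAddCommGroup E] [InnerProductSpace ℝ E]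
    [CompleteSpace E] {F : E → ℝ} {v : E} {t : ℝ} (hF : DifferentiableAt ℝ F (t • v)) :
    HasDerivAt (fun s : ℝ => F (s • v)) (inner ℝ (gradient F (t • v)) v) t := by
  rw [inner_gradient_left]
  have hline : HasDerivAt (fun s : ℝ => s • v) v t := by
    simpa using (hasDerivAt_id t).smul_const v
  exact hF.hasFDerivAt.comp_hasDerivAt t hline

theorem EuclideanSpace.inner_toLp_const_one {ι : Type*} [Fintype ι] (x : EuclideanSpace ℝ ι) :
    inner ℝ x (WithLp.toLp 2 (fun _ => (1 : ℝ))) = ∑ i, x i := by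
  simp [PiLp.inner_apply]

theorem sum_mul_div_sum_const_mul {ι : Type*} [Fintype ι] (a t : ℝ) {R : ι → ℝ}
    (hR : ∑ j, R j ≠ 0) :
    ∑ i, a * R i / ∑ j, t * R j = a / t := by
  rw [← Finset.mul_sum, ← Finset.sum_div, ← Finset.mul_sum, mul_comm t, ← div_div,
    mul_div_cancel_right₀ _ hR]

theorem no_discount_function_general (n : ℕ) (f : ℝ) (hf : f ∈ Set.Ioo (0 : ℝ) 1)
    (R : EuclideanSpace ℝ (Fin n)) (hR : ∀ i, 0 ≤ R i) (hR0 : R ≠ 0) :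
    ¬ ∃ F : EuclideanSpace ℝ (Fin n) → ℝ, Differentiable ℝ F ∧
      ∀ p : EuclideanSpace ℝ (Fin n), (∀ i, 0 < p i) →
        (∀ i, 8 * f * R i / (∑ j, p j * R j) ≤ gradient F p i) ∧ F p ≤ 1 := by
  rintro ⟨F, hF, hcond⟩
  set one : EuclideanSpace ℝ (Fin n) := WithLp.toLp 2 (fun _ => 1)
  have hpos : ∀ t ∈ Ioi (0 : ℝ), ∀ i, 0 < (t • one) i := fun t ht _ => by simpa [one] using ht
  have hsumR : ∑ j, R j ≠ 0 := fun h => hR0 <| PiLp.ext fun i =>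
    (Finset.sum_eq_zero_iff_of_nonneg fun j _ => hR j).1 h i (Finset.mem_univ i)
  have hderiv : ∀ t ∈ Ioi (0 : ℝ),
      HasDerivAt (fun s => F (s • one)) (∑ i, gradient F (t • one) i) t := fun t _ => by
    simpa only [one, EuclideanSpace.inner_toLp_const_one] using
      hasDerivAt_comp_smul_const (hF (t • one))
  have hbound : ∀ t ∈ Ioi (0 : ℝ), 8 * f / t ≤ ∑ i, gradient F (t • one) i := fun t ht => by
    rw [← sum_mul_div_sum_const_mul (8 * f) t hsumR]
    refine Finset.sum_le_sum fun i _ => ?_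
    simpa [one] using (hcond _ (hpos t ht)).1 i
  obtain ⟨t, ht1, ht0⟩ := ((tendsto_atTop_of_div_le_deriv (by linarith [hf.1]) hderiv
    hbound).eventually_gt_atTop 1 |>.and (eventually_gt_atTop 0)).exists
  exact (hcond _ (hpos t ht0)).2.not_gt ht1

/-- For `n ≥ 1`, a lending fee `f ∈ (0,1)`, and reserves `R ≥ 0`, `R ≠ 0`,
there is no differentiable `F : ℝⁿ → ℝ` such that on the open positive orthant the gradient
of `F` is componentwise at least `8fR/(p·R)` and `F ≤ 1`. -/
theorem no_discount_function (n : ℕ) (hn : 1 ≤ n) (f : ℝ) (hf : f ∈ Set.Ioo (0 : ℝ) 1)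
    (R : EuclideanSpace ℝ (Fin n)) (hR : ∀ i, 0 ≤ R i) (hR0 : R ≠ 0) :
    ¬ ∃ F : EuclideanSpace ℝ (Fin n) → ℝ, Differentiable ℝ F ∧
      ∀ p : EuclideanSpace ℝ (Fin n), (∀ i, 0 < p i) →
        (∀ i, 8 * f * R i / (∑ j, p j * R j) ≤ gradient F p i) ∧ F p ≤ 1 :=
  no_discount_function_general n f hf R hR hR0
end

section
/- Let n ≥ 1, let f > 0, let R ∈ ℝ^n with R ≥ 0 componentwise and R ≠ 0, and let F : ℝ^n → ℝ be differentiable on the open positive orthant ℝ^n_{++}. Suppose that for every p ∈ ℝ^n_{++} the gradient satisfies (∇F(p))_i ≥ 8 f R_i / (p · R) for every index i. Then for all p₁, p₂ ∈ ℝ^n_{++} with p₁ ≤ p₂ componentwise, one has F(p₂) − F(p₁) ≥ 8 f · ln((p₂ · R)/(p₁ · R)). -/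
/-!
By the mean value theorem on the segment from `p₁` to `p₂`, it suffices to compare the derivatives
of `F` and of `G p = 8 f log (p · R)` in the direction `p₂ - p₁`. The gradient of `G` at `p` is
`8 f R / (p · R)`, which the hypothesis bounds componentwise by `∇F p`, and pairing with the
nonnegative vector `p₂ - p₁` preserves this inequality.
-/

open InnerProductSpace
open scoped RealInnerProductSpace

section

variable {E : Type*} [NormedAddCommGroup E] [NormedSpace ℝ E]

theorem Convex.sub_le_sub_of_fderiv_apply_le {s : Set E} (hs : Convex ℝ s) (hso : IsOpen s)
    {F G : E → ℝ} (hF : DifferentiableOn ℝ F s) (hG : DifferentiableOn ℝ G s) {x y : E}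
    (hx : x ∈ s) (hy : y ∈ s) (h : ∀ z ∈ s, fderiv ℝ G z (y - x) ≤ fderiv ℝ F z (y - x)) :
    G y - G x ≤ F y - F x := by
  have hFG : ∀ z ∈ s, HasFDerivWithinAt (F - G) (fderiv ℝ F z - fderiv ℝ G z) s z := fun z hz =>
    ((hF.differentiableAt (hso.mem_nhds hz)).hasFDerivAt.sub
      (hG.differentiableAt (hso.mem_nhds hz)).hasFDerivAt).hasFDerivWithinAt
  obtain ⟨z, hz, hmvt⟩ := domain_mvt hFG hs hx hy
  have := h z (hs.segment_subset hx hy hz)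
  simp only [Pi.sub_apply, sub_apply] at hmvt
  linarith

theorem ContinuousLinearMap.hasFDerivAt_const_mul_log (ℓ : StrongDual ℝ E) (c : ℝ) {x : E}
    (hx : ℓ x ≠ 0) : HasFDerivAt (fun p => c * Real.log (ℓ p)) ((c / ℓ x) • ℓ) x := by
  rw [div_eq_mul_inv, ← smul_smul]
  exact (ℓ.hasFDerivAt.log hx).const_mul c

end

namespace EuclideanSpace

variable {ι : Type*}

theorem convex_setOf_forall_pos : Convex ℝ {p : EuclideanSpace ℝ ι | ∀ i, 0 < p i} := by
  rw [Set.ofPred_forall]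
  exact convex_iInter fun i => convex_halfSpace_gt (proj (𝕜 := ℝ) i).isLinear 0

variable [Fintype ι]

theorem isOpen_setOf_forall_pos : IsOpen {p : EuclideanSpace ℝ ι | ∀ i, 0 < p i} := by
  rw [Set.ofPred_forall]
  exact isOpen_iInter_of_finite fun i => isOpen_lt continuous_const (proj (𝕜 := ℝ) i).continuous

theorem inner_eq_sum_mul (R p : EuclideanSpace ℝ ι) : ⟪R, p⟫ = ∑ j, p j * R j := by
  simp [PiLp.inner_apply]

theorem inner_le_inner_of_le {a b v : EuclideanSpace ℝ ι} (hab : ∀ i, a i ≤ b i)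
    (hv : ∀ i, 0 ≤ v i) : ⟪a, v⟫ ≤ ⟪b, v⟫ := by
  simp only [inner_eq_sum_mul]
  exact Finset.sum_le_sum fun i _ => mul_le_mul_of_nonneg_left (hab i) (hv i)

theorem inner_pos_of_pos {R p : EuclideanSpace ℝ ι} (hR : ∀ i, 0 ≤ R i) (hR0 : R ≠ 0)
    (hp : ∀ i, 0 < p i) : 0 < ⟪R, p⟫ := by
  obtain ⟨i, hi⟩ : ∃ i, R i ≠ 0 := by
    by_contra! h
    exact hR0 (PiLp.ext h)
  rw [inner_eq_sum_mul]
  exact Finset.sum_pos' (fun j _ => mul_nonneg (hp j).le (hR j))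
    ⟨i, Finset.mem_univ i, mul_pos (hp i) ((hR i).lt_of_ne' hi)⟩

end EuclideanSpace

open EuclideanSpace

theorem gradient_lower_bound_implies_log_growth_general (n : ℕ) (f : ℝ)
    (R : EuclideanSpace ℝ (Fin n)) (hR : ∀ i, 0 ≤ R i) (hR0 : R ≠ 0)
    (F : EuclideanSpace ℝ (Fin n) → ℝ)
    (hFdiff : DifferentiableOn ℝ F {p : EuclideanSpace ℝ (Fin n) | ∀ i, 0 < p i})
    (hgrad : ∀ p : EuclideanSpace ℝ (Fin n), (∀ i, 0 < p i) →
      ∀ i, 8 * f * R i / (∑ j, p j * R j) ≤ gradient F p i)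
    (p₁ p₂ : EuclideanSpace ℝ (Fin n)) (hp₁ : ∀ i, 0 < p₁ i) (hp₂ : ∀ i, 0 < p₂ i)
    (hle : ∀ i, p₁ i ≤ p₂ i) :
    8 * f * Real.log ((∑ j, p₂ j * R j) / (∑ j, p₁ j * R j)) ≤ F p₂ - F p₁ := by
  set ℓ := innerSL ℝ R
  have hℓ (p : EuclideanSpace ℝ (Fin n)) : ℓ p = ∑ j, p j * R j := inner_eq_sum_mul R p
  have hpos (p : EuclideanSpace ℝ (Fin n)) (hp : ∀ i, 0 < p i) : 0 < ℓ p :=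
    inner_pos_of_pos hR hR0 hp
  have hlog (p : EuclideanSpace ℝ (Fin n)) (hp : ∀ i, 0 < p i) :=
    ℓ.hasFDerivAt_const_mul_log (8 * f) (hpos p hp).ne'
  have key := convex_setOf_forall_pos.sub_le_sub_of_fderiv_apply_le isOpen_setOf_forall_pos
    hFdiff (fun p hp => (hlog p hp).differentiableAt.differentiableWithinAt) hp₁ hp₂
    fun z hz => by
      rw [(hlog z hz).fderiv, ← inner_gradient_left]
      calc ((8 * f / ℓ z) • ℓ) (p₂ - p₁) = ⟪(8 * f / ℓ z) • R, p₂ - p₁⟫ := by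
            simp [ℓ, real_inner_smul_left]
        _ ≤ ⟪gradient F z, p₂ - p₁⟫ := inner_le_inner_of_le
            (fun i => by simpa [hℓ, mul_div_right_comm] using hgrad z hz i)
            fun i => by simpa using hle i
  rwa [← hℓ, ← hℓ, Real.log_div (hpos p₂ hp₂).ne' (hpos p₁ hp₁).ne', mul_sub]

/-- If `F` is differentiable on the open positive orthant and its gradient is
componentwise at least `8fR/(p·R)` there, then for `p₁ ≤ p₂` in the orthant,
`F p₂ - F p₁ ≥ 8f · ln((p₂·R)/(p₁·R))`. -/
theorem gradient_lower_bound_implies_log_growth (n : ℕ) (hn : 1 ≤ n) (f : ℝ) (hf : 0 < f)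
    (R : EuclideanSpace ℝ (Fin n)) (hR : ∀ i, 0 ≤ R i) (hR0 : R ≠ 0)
    (F : EuclideanSpace ℝ (Fin n) → ℝ)
    (hFdiff : DifferentiableOn ℝ F {p : EuclideanSpace ℝ (Fin n) | ∀ i, 0 < p i})
    (hgrad : ∀ p : EuclideanSpace ℝ (Fin n), (∀ i, 0 < p i) →
      ∀ i, 8 * f * R i / (∑ j, p j * R j) ≤ gradient F p i)
    (p₁ p₂ : EuclideanSpace ℝ (Fin n)) (hp₁ : ∀ i, 0 < p₁ i) (hp₂ : ∀ i, 0 < p₂ i)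
    (hle : ∀ i, p₁ i ≤ p₂ i) :
    8 * f * Real.log ((∑ j, p₂ j * R j) / (∑ j, p₁ j * R j)) ≤ F p₂ - F p₁ :=
  gradient_lower_bound_implies_log_growth_general n f R hR hR0 F hFdiff hgrad p₁ p₂ hp₁ hp₂ hle
end

section
/- No target weight mechanism achieves a uniform delta shrinkage, in the following sense. Let n ≥ 1, let f ∈ (0,1), let R ∈ ℝ^n with R ≥ 0 componentwise and R ≠ 0, let ℓ ∈ ℝ^n with ℓ ≥ 0 componentwise, and let F : ℝ^n → ℝ be differentiable on the open positive orthant ℝ^n_{++} with 1 + F(p) > 0 for all p ∈ ℝ^n_{++}. Define V_new(p) = (p · R)/(1 + F(p)) + f (p · ℓ). Assume: (i) F is homogeneous of degree zero, i.e. F(λp) = F(p) for all λ > 0 and all p ∈ ℝ^n_{++} (equivalently, V_new respects change of numéraire), and (ii) there exists p₀ ∈ ℝ^n_{++} with F(p₀) = 0. Then there exists no constant c ∈ (0,1) such that ∇V_new(p) ≤ c R componentwise for all p ∈ ℝ^n_{++}. -/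
/-!
Homogeneity of `F` of degree zero makes `V_new` homogeneous of degree one, so Euler's identity
gives `∇V_new(p₀) · p₀ = V_new(p₀) = p₀ · R + f (p₀ · ℓ) ≥ p₀ · R` at the no-trade point `p₀`.
A uniform bound `∇V_new ≤ c R` would instead give `∇V_new(p₀) · p₀ ≤ c (p₀ · R) < p₀ · R`.
-/

open Finset

/-- Euler's identity; homogeneity is only needed along the ray through `p`. -/
theorem fderiv_apply_self_of_smul_eq {E G : Type*} [NormedAddCommGroup E] [NormedSpace ℝ E]
    [NormedAddCommGroup G] [NormedSpace ℝ G] {V : E → G} {p : E} (hV : DifferentiableAt ℝ V p)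
    (hhom : ∀ t : ℝ, 0 < t → V (t • p) = t • V p) :
    fderiv ℝ V p p = V p := by
  have hray : HasDerivAt (fun t : ℝ => V (t • p)) (fderiv ℝ V p p) 1 := by
    have hV' : HasFDerivAt V (fderiv ℝ V p) ((1 : ℝ) • p) := by simpa using hV.hasFDerivAt
    exact hV'.comp_hasDerivAt (1 : ℝ) (by simpa using (hasDerivAt_id (1 : ℝ)).smul_const p)
  have hline : (fun t : ℝ => t • V p) =ᶠ[nhds 1] fun t => V (t • p) := by
    filter_upwards [Ioi_mem_nhds one_pos] with t ht
    exact (hhom t ht).symm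
  simpa using (hray.congr_of_eventuallyEq hline).unique ((hasDerivAt_id (1 : ℝ)).smul_const (V p))

theorem sum_gradient_mul_eq_fderiv {ι : Type*} [Fintype ι] (V : EuclideanSpace ℝ ι → ℝ)
    (p v : EuclideanSpace ℝ ι) : ∑ i, gradient V p i * v i = fderiv ℝ V p v := by
  rw [← InnerProductSpace.toDual_symm_apply, PiLp.inner_apply]
  simp [gradient, mul_comm]

theorem isOpen_setOf_forall_pos {ι : Type*} [Finite ι] :
    IsOpen {p : EuclideanSpace ℝ ι | ∀ i, 0 < p i} := by
  rw [Set.ofPred_forall]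
  exact isOpen_iInter_of_finite fun i =>
    isOpen_lt continuous_const (EuclideanSpace.proj i).continuous

theorem sum_mul_pos_of_pos_of_nonneg {ι : Type*} [Fintype ι] {p R : EuclideanSpace ℝ ι}
    (hp : ∀ i, 0 < p i) (hR : ∀ i, 0 ≤ R i) (hR0 : R ≠ 0) : 0 < ∑ j, p j * R j := by
  obtain ⟨i, hi⟩ : ∃ i, R i ≠ 0 := by
    by_contra! h
    exact hR0 (PiLp.ext h)
  exact sum_pos' (fun j _ => mul_nonneg (hp j).le (hR j))
    ⟨i, mem_univ i, mul_pos (hp i) ((hR i).lt_of_ne' hi)⟩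

section PoolValue

variable {ι : Type*} [Fintype ι] (F : EuclideanSpace ℝ ι → ℝ) (f : ℝ) (R ℓ : EuclideanSpace ℝ ι)

/-- The paper's `V_new`. -/
noncomputable def poolValue (q : EuclideanSpace ℝ ι) : ℝ :=
  (∑ j, q j * R j) / (1 + F q) + f * ∑ j, q j * ℓ j

variable {F f R ℓ}

theorem poolValue_smul {t : ℝ} {p : EuclideanSpace ℝ ι} (hFt : F (t • p) = F p) :
    poolValue F f R ℓ (t • p) = t * poolValue F f R ℓ p := by
  simp only [poolValue, hFt, PiLp.smul_apply, smul_eq_mul, mul_assoc, ← mul_sum]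
  ring

theorem differentiableAt_poolValue {p : EuclideanSpace ℝ ι} (hF : DifferentiableAt ℝ F p)
    (hden : 1 + F p ≠ 0) : DifferentiableAt ℝ (poolValue F f R ℓ) p := by
  have hdot : ∀ v : EuclideanSpace ℝ ι,
      DifferentiableAt ℝ (fun q : EuclideanSpace ℝ ι => ∑ j, q j * v j) p := fun v =>
    DifferentiableAt.fun_sum fun j _ =>
      (EuclideanSpace.proj j : EuclideanSpace ℝ ι →L[ℝ] ℝ).differentiableAt.mul_const (v j)
  unfold poolValue
  simp only [div_eq_mul_inv]
  exact ((hdot R).mul (((differentiableAt_const 1).add hF).fun_inv hden)).add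
    ((hdot ℓ).const_mul f)

end PoolValue

theorem no_uniform_delta_shrinkage_general (n : ℕ)
    (f : ℝ) (hf : f ∈ Set.Ioo (0 : ℝ) 1)
    (R : EuclideanSpace ℝ (Fin n)) (hR : ∀ i, 0 ≤ R i) (hR0 : R ≠ 0)
    (ℓ : EuclideanSpace ℝ (Fin n)) (hℓ : ∀ i, 0 ≤ ℓ i)
    (F : EuclideanSpace ℝ (Fin n) → ℝ)
    (hFdiff : DifferentiableOn ℝ F {p : EuclideanSpace ℝ (Fin n) | ∀ i, 0 < p i})
    (hhom : ∀ lam : ℝ, 0 < lam → ∀ p : EuclideanSpace ℝ (Fin n), (∀ i, 0 < p i) →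
      F (lam • p) = F p)
    (p₀ : EuclideanSpace ℝ (Fin n)) (hp₀ : ∀ i, 0 < p₀ i) (hFp₀ : F p₀ = 0) :
    ¬ ∃ c ∈ Set.Ioo (0 : ℝ) 1, ∀ p : EuclideanSpace ℝ (Fin n), (∀ i, 0 < p i) →
      ∀ i, gradient (fun q : EuclideanSpace ℝ (Fin n) =>
        (∑ j, q j * R j) / (1 + F q) + f * (∑ j, q j * ℓ j)) p i ≤ c * R i := by
  rintro ⟨c, ⟨-, hc1⟩, hgrad⟩
  have hVd : DifferentiableAt ℝ (poolValue F f R ℓ) p₀ :=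
    differentiableAt_poolValue (hFdiff.differentiableAt (isOpen_setOf_forall_pos.mem_nhds hp₀))
      (by simp [hFp₀])
  have hEuler : ∑ i, gradient (poolValue F f R ℓ) p₀ i * p₀ i = poolValue F f R ℓ p₀ := by
    rw [sum_gradient_mul_eq_fderiv]
    exact fderiv_apply_self_of_smul_eq hVd fun t ht => poolValue_smul (hhom t ht p₀ hp₀)
  have hshrink : ∑ i, gradient (poolValue F f R ℓ) p₀ i * p₀ i ≤ c * ∑ j, p₀ j * R j := by
    rw [mul_sum]
    refine sum_le_sum fun i _ => ?_
    calc _ ≤ c * R i * p₀ i := mul_le_mul_of_nonneg_right (hgrad p₀ hp₀ i) (hp₀ i).le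
      _ = c * (p₀ i * R i) := by ring
  have hS := sum_mul_pos_of_pos_of_nonneg hp₀ hR hR0
  have hT : 0 ≤ f * ∑ j, p₀ j * ℓ j :=
    mul_nonneg hf.1.le (sum_nonneg fun j _ => mul_nonneg (hp₀ j).le (hℓ j))
  rw [hEuler, poolValue, hFp₀, add_zero, div_one] at hshrink
  nlinarith

/-- no uniform delta shrinkage: with `V_new(p) = (p·R)/(1+F p) + f (p·ℓ)`,
if `F` is homogeneous of degree zero on the open positive orthant and `F p₀ = 0` for some
`p₀` in the orthant, then there is no `c ∈ (0,1)` with `∇V_new(p) ≤ cR` componentwise on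
the whole orthant. -/
theorem no_uniform_delta_shrinkage (n : ℕ) (hn : 1 ≤ n)
    (f : ℝ) (hf : f ∈ Set.Ioo (0 : ℝ) 1)
    (R : EuclideanSpace ℝ (Fin n)) (hR : ∀ i, 0 ≤ R i) (hR0 : R ≠ 0)
    (ℓ : EuclideanSpace ℝ (Fin n)) (hℓ : ∀ i, 0 ≤ ℓ i)
    (F : EuclideanSpace ℝ (Fin n) → ℝ)
    (hFdiff : DifferentiableOn ℝ F {p : EuclideanSpace ℝ (Fin n) | ∀ i, 0 < p i})
    (hF : ∀ p : EuclideanSpace ℝ (Fin n), (∀ i, 0 < p i) → 0 < 1 + F p)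
    (hhom : ∀ lam : ℝ, 0 < lam → ∀ p : EuclideanSpace ℝ (Fin n), (∀ i, 0 < p i) →
      F (lam • p) = F p)
    (p₀ : EuclideanSpace ℝ (Fin n)) (hp₀ : ∀ i, 0 < p₀ i) (hFp₀ : F p₀ = 0) :
    ¬ ∃ c ∈ Set.Ioo (0 : ℝ) 1, ∀ p : EuclideanSpace ℝ (Fin n), (∀ i, 0 < p i) →
      ∀ i, gradient (fun q : EuclideanSpace ℝ (Fin n) =>
        (∑ j, q j * R j) / (1 + F q) + f * (∑ j, q j * ℓ j)) p i ≤ c * R i :=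
  no_uniform_delta_shrinkage_general n f hf R hR hR0 ℓ hℓ F hFdiff hhom p₀ hp₀ hFp₀
end
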